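/- arXiv:2504.15971 — 3 statements merged into one kernel-verified Lean document; each statement's English description precedes it below -/
import Mathlib

section
/- Let K be a number field. There is an effectively computable constant c > 0 depending only on K with the following property: for every nonzero ideal 𝔞 ⊆ O_K there exists a nonzero element γ ∈ 𝔞 such that h(γ) ≤ c · log N(𝔞). Moreover, if 𝔞 is principal, γ may be chosen to be a generator of 𝔞. -/
open NumberField

/-- The denominator ideal of `x ∈ K`: the ideal of all `a ∈ O_K` with `a·x ∈ O_K`. -/
noncomputable def denomIdeal (K : Type*) [Field K] [NumberField K] (x : K) :
    Ideal (𝓞 K) :=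
  Submodule.comap (LinearMap.toSpanSingleton (𝓞 K) K x) 1

/-- The absolute logarithmic Weil height of `x ∈ K`, normalized to `ℚ`:
`h(x) = (1/[K:ℚ]) (log N(den(x)) + ∑_{w ∣ ∞} mult(w) · log⁺ w(x))`. -/
noncomputable def weilHeight {K : Type*} [Field K] [NumberField K] (x : K) : ℝ :=
  (Module.finrank ℚ K : ℝ)⁻¹ *
    (Real.log (Ideal.absNorm (denomIdeal K x)) +
      ∑ w : InfinitePlace K, (w.mult : ℝ) * Real.log (max 1 (w x)))

/-!
By Dirichlet's unit theorem the logarithmic embeddings of the units form a full lattice in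
`logSpace K`, so multiplying `γ₀ ≠ 0` by a suitable unit makes every component
`mult w · log w(γ)` with `w ≠ w₀` bounded by a constant; the product formula
`∑ mult w · log w(γ) = log N(γ₀)` then bounds the remaining component too. Hence `γ₀` has an
associate of height `≪ 1 + log N(γ₀)`, which is `≪ log N(γ₀)` unless `γ₀` is a unit (then take
`γ = 1`). For `𝔞` principal apply this to a generator, in general to `N(𝔞) ∈ 𝔞`, whose norm is
`N(𝔞)^[K:ℚ]`.
-/

open NumberField NumberField.InfinitePlace NumberField.Units NumberField.Units.dirichletUnitTheorem
  Module Real Finset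

theorem le_sum_add_card_mul_of_abs_le {ι : Type*} [Fintype ι] {f : ι → ℝ} {C : ℝ} (hC : 0 ≤ C)
    (i₀ : ι) (hsum : 0 ≤ ∑ j, f j) (hf : ∀ i ≠ i₀, |f i| ≤ C) (i : ι) :
    f i ≤ ∑ j, f j + Fintype.card ι * C := by
  classical
  have hcard : (1 : ℝ) ≤ Fintype.card ι := by exact_mod_cast Fintype.card_pos_iff.mpr ⟨i⟩
  obtain rfl | hi := eq_or_ne i i₀
  · have hrest : -(Fintype.card ι * C) ≤ ∑ j ∈ univ.erase i, f j :=
      calc -(Fintype.card ι * C) ≤ -((univ.erase i).card • C) := by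
            rw [nsmul_eq_mul]; gcongr; exact_mod_cast card_le_univ _
        _ = ∑ _j ∈ univ.erase i, -C := by simp
        _ ≤ _ := sum_le_sum fun j hj => neg_le_of_abs_le (hf j (ne_of_mem_erase hj))
    linarith [add_sum_erase univ f (mem_univ i)]
  · nlinarith [le_of_abs_le (hf i hi)]

section

variable (K : Type*) [Field K] [NumberField K]

open scoped Classical in
theorem NumberField.Units.exists_norm_logEmbedding_add_le :
    ∃ C : ℝ, 0 ≤ C ∧
      ∀ x : logSpace K, ∃ u : (𝓞 K)ˣ, ‖logEmbedding K (Additive.ofMul u) + x‖ ≤ C := by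
  let b := (basisUnitLattice K).ofZLatticeBasis ℝ (unitLattice K)
  refine ⟨∑ i, ‖b i‖, sum_nonneg fun _ _ => norm_nonneg _, fun x => ?_⟩
  have hmem : (ZSpan.floor b (-x) : logSpace K) ∈ unitLattice K := by
    rw [← (basisUnitLattice K).ofZLatticeBasis_span ℝ]; exact (ZSpan.floor b (-x)).2
  obtain ⟨u, -, hu⟩ := Submodule.mem_map.mp hmem
  refine ⟨Additive.toMul u, ?_⟩
  have hfract := ZSpan.norm_fract_le b (-x)
  rw [ZSpan.fract_apply, ← hu, ← norm_neg, neg_sub, sub_neg_eq_add] at hfract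
  simpa using hfract

variable {K}

theorem denomIdeal_algebraMap (γ : 𝓞 K) : denomIdeal K (algebraMap (𝓞 K) K γ) = ⊤ := by
  rw [eq_top_iff]
  intro a _
  simp only [denomIdeal, Submodule.mem_comap, LinearMap.toSpanSingleton_apply,
    Submodule.one_eq_range, LinearMap.mem_range]
  exact ⟨a * γ, by simp [Algebra.linearMap_apply, Algebra.smul_def]⟩

theorem weilHeight_algebraMap (γ : 𝓞 K) :
    weilHeight (algebraMap (𝓞 K) K γ) =
      (finrank ℚ K : ℝ)⁻¹ * ∑ w : InfinitePlace K, (w.mult : ℝ) * log (max 1 (w γ)) := by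
  rw [weilHeight, denomIdeal_algebraMap, Ideal.absNorm_top, Nat.cast_one, log_one, zero_add]

theorem weilHeight_algebraMap_le {γ : 𝓞 K} {B : ℝ} (hB : 0 ≤ B)
    (h : ∀ w : InfinitePlace K, (w.mult : ℝ) * log (w γ) ≤ B) :
    weilHeight (algebraMap (𝓞 K) K γ) ≤ Fintype.card (InfinitePlace K) * B := by
  have hterm (w : InfinitePlace K) : (w.mult : ℝ) * log (max 1 (w γ)) ≤ B := by
    rcases le_total (w γ) 1 with hw | hw
    · simpa [max_eq_left hw] using hB
    · rw [max_eq_right hw]; exact h w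
  have hsum : ∑ w : InfinitePlace K, (w.mult : ℝ) * log (max 1 (w γ)) ≤
      Fintype.card (InfinitePlace K) * B := by
    simpa using sum_le_card_nsmul univ _ B fun w _ => hterm w
  have hn : (1 : ℝ) ≤ finrank ℚ K := by exact_mod_cast finrank_pos (R := ℚ) (M := K)
  rw [weilHeight_algebraMap]
  refine le_trans (mul_le_of_le_one_left ?_ (inv_le_one_of_one_le₀ hn)) hsum
  exact sum_nonneg fun w _ => mul_nonneg w.mult.cast_nonneg (log_nonneg (le_max_left _ _))

theorem sum_mult_mul_log_eq_log_absNorm {γ : 𝓞 K} (hγ : γ ≠ 0) :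
    ∑ w : InfinitePlace K, (w.mult : ℝ) * log (w γ) = log (Ideal.absNorm (Ideal.span {γ})) := by
  have hγ' : (γ : K) ≠ 0 := by simpa using hγ
  rw [← Finset.sum_congr rfl fun w _ => log_pow (w γ) w.mult,
    ← log_prod fun w _ => pow_ne_zero _ (pos_iff.mpr hγ').ne', prod_eq_abs_norm,
    Ideal.absNorm_span_singleton, ← Algebra.coe_norm_int]
  push_cast [Nat.cast_natAbs]
  norm_num

open scoped Classical in
variable (K) in
theorem exists_associated_forall_mult_mul_log_le : ∃ C : ℝ, 0 ≤ C ∧ ∀ γ₀ : 𝓞 K, γ₀ ≠ 0 →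
    ∃ γ : 𝓞 K, Associated γ₀ γ ∧ ∀ w : InfinitePlace K,
      (w.mult : ℝ) * log (w γ) ≤ log (Ideal.absNorm (Ideal.span {γ₀})) + C := by
  obtain ⟨C, hC0, hC⟩ := exists_norm_logEmbedding_add_le K
  refine ⟨Fintype.card (InfinitePlace K) * C, by positivity, fun γ₀ hγ₀ => ?_⟩
  set x : logSpace K := fun w => (w.1.mult : ℝ) * log (w.1 γ₀)
  obtain ⟨u, hu⟩ := hC x
  have hγ₀' : (γ₀ : K) ≠ 0 := by simpa using hγ₀
  have hsum := sum_mult_mul_log_eq_log_absNorm (mul_ne_zero u.ne_zero hγ₀)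
  rw [Ideal.span_singleton_mul_left_unit u.isUnit] at hsum
  have hbounded (w : InfinitePlace K) (hw : w ≠ w₀) :
      |(w.mult : ℝ) * log (w (u * γ₀))| ≤ C := by
    have hcomponent :
        (w.mult : ℝ) * log (w (u * γ₀)) = (logEmbedding K (Additive.ofMul u) + x) ⟨w, hw⟩ := by
      rw [Pi.add_apply, logEmbedding_component, map_mul,
        log_mul (pos_iff.mpr (by simp)).ne' (pos_iff.mpr hγ₀').ne', mul_add]
    rw [hcomponent, ← Real.norm_eq_abs]
    exact (norm_le_pi_norm _ _).trans hu
  refine ⟨u * γ₀, ⟨u, mul_comm _ _⟩, fun w => ?_⟩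
  rw [← hsum]
  exact le_sum_add_card_mul_of_abs_le hC0 w₀ (hsum ▸ log_natCast_nonneg _) hbounded w

variable (K) in
theorem exists_associated_weilHeight_le_mul_log_absNorm :
    ∃ c : ℝ, 0 < c ∧ ∀ γ₀ : 𝓞 K, γ₀ ≠ 0 → ∃ γ : 𝓞 K, Associated γ₀ γ ∧
      weilHeight (algebraMap (𝓞 K) K γ) ≤ c * log (Ideal.absNorm (Ideal.span {γ₀})) := by
  obtain ⟨C, hC0, hC⟩ := exists_associated_forall_mult_mul_log_le K
  have hlog2 : 0 < log 2 := log_pos one_lt_two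
  refine ⟨Fintype.card (InfinitePlace K) * (1 + C / log 2), by positivity, fun γ₀ hγ₀ => ?_⟩
  have hN : Ideal.absNorm (Ideal.span {γ₀}) ≠ 0 := by simpa using hγ₀
  rcases (Nat.one_le_iff_ne_zero.mpr hN).eq_or_lt with hN1 | hN2
  · have hunit : IsUnit γ₀ := by
      rwa [eq_comm, Ideal.absNorm_eq_one_iff, Ideal.span_singleton_eq_top] at hN1
    refine ⟨1, associated_one_iff_isUnit.mpr hunit, ?_⟩
    rw [← hN1]
    simpa using weilHeight_algebraMap_le (γ := (1 : 𝓞 K)) le_rfl fun w => by simp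
  · obtain ⟨γ, hγ, hbound⟩ := hC γ₀ hγ₀
    set L := log (Ideal.absNorm (Ideal.span {γ₀}))
    have hL : log 2 ≤ L := log_le_log two_pos (by exact_mod_cast hN2)
    have hCL : C ≤ C / log 2 * L := by
      rw [div_mul_eq_mul_div, le_div_iff₀ hlog2]; nlinarith
    refine ⟨γ, hγ, (weilHeight_algebraMap_le (by linarith) hbound).trans ?_⟩
    calc (Fintype.card (InfinitePlace K) : ℝ) * (L + C)
        ≤ Fintype.card (InfinitePlace K) * (L + C / log 2 * L) := by gcongr
      _ = _ := by ring

end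

/-- For a number field `K` there is an effectively computable constant `c > 0` such that
every nonzero ideal `𝔞 ⊆ O_K` contains a nonzero element `γ` with `h(γ) ≤ c log N(𝔞)`;
moreover if `𝔞` is principal, `γ` may be chosen to be a generator of `𝔞`. -/
theorem stmt6 (K : Type*) [Field K] [NumberField K] :
    ∃ c : ℝ, 0 < c ∧ ∀ 𝔞 : Ideal (𝓞 K), 𝔞 ≠ ⊥ →
      (∃ γ ∈ 𝔞, γ ≠ 0 ∧ weilHeight (algebraMap (𝓞 K) K γ) ≤ c * Real.log (Ideal.absNorm 𝔞)) ∧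
      (𝔞.IsPrincipal → ∃ γ : 𝓞 K, 𝔞 = Ideal.span {γ} ∧
        weilHeight (algebraMap (𝓞 K) K γ) ≤ c * Real.log (Ideal.absNorm 𝔞)) := by
  obtain ⟨c, hc, hassoc⟩ := exists_associated_weilHeight_le_mul_log_absNorm K
  have hn : (1 : ℝ) ≤ finrank ℚ K := by exact_mod_cast finrank_pos (R := ℚ) (M := K)
  refine ⟨finrank ℚ K * c, by positivity, fun 𝔞 h𝔞 => ⟨?_, fun ⟨γ₀, h𝔞γ₀⟩ => ?_⟩⟩
  · have hN : ((Ideal.absNorm 𝔞 : ℕ) : 𝓞 K) ≠ 0 := by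
      simpa [Ideal.absNorm_eq_zero_iff] using h𝔞
    obtain ⟨γ, hγ, hheight⟩ := hassoc _ hN
    refine ⟨γ, ?_, hγ.ne_zero_iff.mp hN, hheight.trans_eq ?_⟩
    · rw [← Ideal.span_singleton_le_iff_mem, ← Ideal.span_singleton_eq_span_singleton.mpr hγ,
        Ideal.span_singleton_le_iff_mem]
      exact Ideal.absNorm_mem 𝔞
    · rw [Ideal.absNorm_span_natCast, RingOfIntegers.rank, Nat.cast_pow, log_pow]; ring
  · obtain ⟨γ, hγ, hheight⟩ := hassoc γ₀ (by rintro rfl; simp_all)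
    refine ⟨γ, h𝔞γ₀.trans (Ideal.span_singleton_eq_span_singleton.mpr hγ), ?_⟩
    rw [h𝔞γ₀, mul_assoc]
    exact hheight.trans (le_mul_of_one_le_left (by positivity) hn)
end

section
/- Let f, g ∈ ℂ[t] be coprime polynomials, not both constant. Then the polynomial f² + g³ is non-constant. -/
/-!
Differentiating the constant `f² + g³` gives `2 f f' = -3 g² g'`. Coprimality then forces
`f ∣ g'` and `g² ∣ f'`, so a nonzero `g'` would give `deg f < deg g` and a nonzero `f'`
would give `deg g < deg f`. Hence one of the derivatives vanishes, the identity kills the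
other, and both `f` and `g` are constant.
-/

open Polynomial

namespace Polynomial

variable {R : Type*} [CommRing R] [NoZeroDivisors R] {p q : R[X]}

theorem natDegree_lt_of_dvd_derivative (hpq : p ∣ derivative q) (hq : derivative q ≠ 0) :
    p.natDegree < q.natDegree :=
  (natDegree_le_of_dvd hpq hq).trans_lt <|
    natDegree_derivative_lt fun h => hq (derivative_of_natDegree_zero h)

theorem derivative_eq_zero_of_pow_mul_derivative_eq_zero {n : ℕ}
    (h : p ^ n * derivative p = 0) : derivative p = 0 :=
  (mul_eq_zero.mp h).elim (fun hp => by rw [eq_zero_of_pow_eq_zero hp, derivative_zero]) id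

theorem derivative_eq_zero_or_of_dvd_derivative (hpq : p ∣ derivative q)
    (hqp : q ∣ derivative p) : derivative p = 0 ∨ derivative q = 0 := by
  by_contra! h
  exact (natDegree_lt_of_dvd_derivative hpq h.2).asymm (natDegree_lt_of_dvd_derivative hqp h.1)

end Polynomial

section SumOfSquareAndCube

variable {K : Type*} [Field K] [CharZero K] {f g : K[X]}

theorem derivative_eq_zero_of_isCoprime_of_derivative_sq_add_cube_eq_zero (hcop : IsCoprime f g)
    (h : derivative (f ^ 2 + g ^ 3) = 0) : derivative f = 0 ∧ derivative g = 0 := by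
  have hderiv : C 2 * f * derivative f = -(C 3 * g ^ 2 * derivative g) := by
    simp only [derivative_add, derivative_pow] at h
    push_cast at h
    linear_combination h
  have hC2 : IsUnit (C 2 : K[X]) := isUnit_C.mpr (by norm_num)
  have hC3 : IsUnit (C 3 : K[X]) := isUnit_C.mpr (by norm_num)
  have hfg : f ∣ derivative g := by
    refine hC3.dvd_mul_left.mp <| (hcop.pow_right (n := 2)).dvd_of_dvd_mul_left ?_
    exact ⟨-derivative f * C 2, by linear_combination hderiv⟩
  have hgf : g ∣ derivative f := by
    refine dvd_trans (dvd_pow_self g two_ne_zero) ?_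
    refine hC2.dvd_mul_left.mp <| (hcop.symm.pow_left (m := 2)).dvd_of_dvd_mul_left ?_
    exact ⟨-derivative g * C 3, by linear_combination hderiv⟩
  rcases derivative_eq_zero_or_of_dvd_derivative hfg hgf with hf' | hg'
  · refine ⟨hf', derivative_eq_zero_of_pow_mul_derivative_eq_zero (n := 2) ?_⟩
    have : C 3 * (g ^ 2 * derivative g) = 0 := by linear_combination hderiv - C 2 * f * hf'
    exact (mul_eq_zero.mp this).resolve_left hC3.ne_zero
  · refine ⟨derivative_eq_zero_of_pow_mul_derivative_eq_zero (n := 1) ?_, hg'⟩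
    have : C 2 * (f ^ 1 * derivative f) = 0 := by linear_combination hderiv - C 3 * g ^ 2 * hg'
    exact (mul_eq_zero.mp this).resolve_left hC2.ne_zero

end SumOfSquareAndCube

/-- Let `f, g ∈ ℂ[t]` be coprime polynomials, not both constant.
Then `f² + g³` is non-constant. -/
theorem stmt7 (f g : Polynomial ℂ) (hcop : IsCoprime f g)
    (hconst : ¬ (f.natDegree = 0 ∧ g.natDegree = 0)) :
    (f ^ 2 + g ^ 3).natDegree ≠ 0 := by
  intro h
  obtain ⟨hf, hg⟩ := derivative_eq_zero_of_isCoprime_of_derivative_sq_add_cube_eq_zero hcop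
    (derivative_eq_zero.mpr h)
  exact hconst ⟨derivative_eq_zero.mp hf, derivative_eq_zero.mp hg⟩
end

section
/- Let A, B ∈ ℤ[t] be polynomials that are coprime over ℚ, not both constant, and such that D = −16(4A³ + 27B²) ∈ ℤ[t] is not the zero polynomial. Then the polynomial D has at least two distinct complex roots. -/
/-!
Let `a`, `b` be the images of `A`, `B` in `ℂ[t]`, and `u = 4a³`, `v = 27b²`; then `u`, `v` are
coprime and `u + v + (-(u + v)) = 0`. If `D` had at most one distinct root, the radical of `u + v` would have
degree at most one, and Mason–Stothers would give `3 deg a, 2 deg b ≤ deg a + deg b`, i.e.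
`deg a = deg b = 0`.
-/

open Polynomial UniqueFactorizationMonoid

namespace Polynomial

variable {k : Type*} [Field k] [DecidableEq k]

theorem natDegree_radical_le_one_of_isRoot_eq [IsAlgClosed k] {p : k[X]} (hp : p ≠ 0)
    (h : ∀ z w, p.IsRoot z → p.IsRoot w → z = w) : (radical p).natDegree ≤ 1 := by
  obtain ⟨α, hα⟩ : ∃ α, ∀ r ∈ p.roots, r = α := by
    rcases Multiset.empty_or_exists_mem p.roots with h0 | ⟨β, hβ⟩
    · exact ⟨0, by simp [h0]⟩
    · exact ⟨β, fun r hr => h r β (isRoot_of_mem_roots hr) (isRoot_of_mem_roots hβ)⟩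
  have hp_eq : C p.leadingCoeff * (X - C α) ^ p.roots.card = p := by
    have h := C_leadingCoeff_mul_prod_multiset_X_sub_C
      (IsAlgClosed.card_roots_eq_natDegree (p := p))
    rwa [Multiset.eq_replicate_of_mem hα, Multiset.map_replicate, Multiset.prod_replicate] at h
  have hdvd : p ∣ (X - C α) ^ p.roots.card := by
    calc p = C p.leadingCoeff * (X - C α) ^ p.roots.card := hp_eq.symm
      _ ∣ (X - C α) ^ p.roots.card :=
        (isUnit_C.2 (leadingCoeff_ne_zero.2 hp).isUnit).mul_left_dvd.2 dvd_rfl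
  calc (radical p).natDegree ≤ (X - C α).natDegree :=
        natDegree_le_of_dvd ((radical_dvd_radical hdvd (pow_ne_zero _ (X_sub_C_ne_zero α))).trans
          (radical_pow_dvd.trans radical_dvd_self)) (X_sub_C_ne_zero α)
    _ = 1 := natDegree_X_sub_C α

theorem radical_C_mul_pow {c : k} (hc : c ≠ 0) (a : k[X]) {n : ℕ} (hn : n ≠ 0) :
    radical (C c * a ^ n) = radical a := by
  rw [radical_mul_of_isUnit_left (isUnit_C.2 hc.isUnit), radical_pow a hn]

theorem natDegree_eq_zero_of_natDegree_radical_cube_add_sq_le_one [CharZero k] {a b : k[X]}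
    (hab : IsCoprime a b) {c₁ c₂ : k} (hc₁ : c₁ ≠ 0) (hc₂ : c₂ ≠ 0)
    (hne : C c₁ * a ^ 3 + C c₂ * b ^ 2 ≠ 0)
    (hrad : (radical (C c₁ * a ^ 3 + C c₂ * b ^ 2)).natDegree ≤ 1) :
    a.natDegree = 0 ∧ b.natDegree = 0 := by
  rcases eq_or_ne a 0 with rfl | ha
  · exact ⟨natDegree_zero, natDegree_eq_zero_of_isUnit (isCoprime_zero_left.1 hab)⟩
  rcases eq_or_ne b 0 with rfl | hb
  · exact ⟨natDegree_eq_zero_of_isUnit (isCoprime_zero_right.1 hab), natDegree_zero⟩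
  set u := C c₁ * a ^ 3
  set v := C c₂ * b ^ 2
  have hu : u.natDegree = 3 * a.natDegree := by
    rw [natDegree_C_mul hc₁, natDegree_pow]
  have hv : v.natDegree = 2 * b.natDegree := by
    rw [natDegree_C_mul hc₂, natDegree_pow]
  have hrad_uvw : (radical (u * v * -(u + v))).natDegree ≤ a.natDegree + b.natDegree + 1 :=
    calc (radical (u * v * -(u + v))).natDegree
        ≤ (radical u * radical v * radical (-(u + v))).natDegree :=
          natDegree_le_of_dvd (radical_mul_dvd.trans (mul_dvd_mul_right radical_mul_dvd _))
            (by simp [radical_ne_zero])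
      _ ≤ (radical u).natDegree + (radical v).natDegree + (radical (-(u + v))).natDegree :=
          natDegree_mul_le.trans (Nat.add_le_add_right natDegree_mul_le _)
      _ ≤ a.natDegree + b.natDegree + 1 := by
          rw [radical_C_mul_pow hc₁ a three_ne_zero, radical_C_mul_pow hc₂ b two_ne_zero,
            UniqueFactorizationDomain.radical_neg]
          gcongr <;> exact natDegree_radical_le
  have hcop : IsCoprime u v :=
    (isCoprime_mul_unit_left_left (isUnit_C.2 hc₁.isUnit) _ _).2
      ((isCoprime_mul_unit_left_right (isUnit_C.2 hc₂.isUnit) _ _).2 hab.pow)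
  rcases Polynomial.abc (by simp [u, ha, hc₁]) (by simp [v, hb, hc₂]) (neg_ne_zero.2 hne) hcop
    (by ring) with ⟨hdu, hdv, -⟩ | ⟨hdu, hdv, -⟩
  · omega
  · rw [derivative_eq_zero] at hdu hdv
    omega

end Polynomial

/-- Let `A, B ∈ ℤ[t]` be coprime over `ℚ`, not both constant, with
`D = -16(4A³ + 27B²)` not the zero polynomial.  Then `D` has at least two
distinct complex roots. -/
theorem stmt8 (A B : Polynomial ℤ)
    (hcop : IsCoprime (A.map (Int.castRingHom ℚ)) (B.map (Int.castRingHom ℚ)))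
    (hconst : ¬ (A.natDegree = 0 ∧ B.natDegree = 0))
    (hD : (-16 : Polynomial ℤ) * (4 * A ^ 3 + 27 * B ^ 2) ≠ 0) :
    ∃ z w : ℂ, z ≠ w ∧
      Polynomial.aeval z ((-16 : Polynomial ℤ) * (4 * A ^ 3 + 27 * B ^ 2)) = 0 ∧
      Polynomial.aeval w ((-16 : Polynomial ℤ) * (4 * A ^ 3 + 27 * B ^ 2)) = 0 := by
  by_contra! hroots
  have hinj : Function.Injective (algebraMap ℤ ℂ) := (algebraMap ℤ ℂ).injective_int
  set a := A.map (algebraMap ℤ ℂ)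
  set b := B.map (algebraMap ℤ ℂ)
  have hab : IsCoprime a b := by
    have hφ : (algebraMap ℚ ℂ).comp (Int.castRingHom ℚ) = algebraMap ℤ ℂ :=
      RingHom.ext_int _ _
    simpa only [coe_mapRingHom, map_map, hφ] using hcop.map (mapRingHom (algebraMap ℚ ℂ))
  have hmap : (4 * A ^ 3 + 27 * B ^ 2).map (algebraMap ℤ ℂ) = C 4 * a ^ 3 + C 27 * b ^ 2 := by
    simp only [a, b, Polynomial.map_add, Polynomial.map_mul, Polynomial.map_pow,
      Polynomial.map_ofNat, map_ofNat C]
  have hne : C 4 * a ^ 3 + C 27 * b ^ 2 ≠ 0 := by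
    rw [← hmap, Ne, Polynomial.map_eq_zero_iff hinj]
    exact right_ne_zero_of_mul hD
  have haeval (z : ℂ) : aeval z ((-16 : ℤ[X]) * (4 * A ^ 3 + 27 * B ^ 2)) =
      -16 * eval z (C 4 * a ^ 3 + C 27 * b ^ 2) := by
    rw [← eval_map_algebraMap, Polynomial.map_mul, hmap, eval_mul]
    simp only [Polynomial.map_neg, Polynomial.map_ofNat, eval_neg, eval_ofNat]
  have hrad := natDegree_radical_le_one_of_isRoot_eq hne fun z w hz hw => by
    by_contra hzw
    exact hroots z w hzw (by rw [haeval, hz.eq_zero, mul_zero])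
      (by rw [haeval, hw.eq_zero, mul_zero])
  obtain ⟨ha, hb⟩ := natDegree_eq_zero_of_natDegree_radical_cube_add_sq_le_one hab (by norm_num)
    (by norm_num) hne hrad
  exact hconst
    ⟨natDegree_map_eq_of_injective hinj A ▸ ha, natDegree_map_eq_of_injective hinj B ▸ hb⟩
end
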